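/- Let ∇ ∈ ℝⁿ, let H be a nonzero symmetric positive semidefinite n×n real matrix, let u be a unit eigenvector of H associated with its largest eigenvalue ‖H‖₂, and suppose ∇ᵀu ≠ 0 and ξ ≥ 0. Then there exists r ∈ ℝⁿ with ∇ᵀr + (1/2)·rᵀHr ≥ ξ and ‖r‖₂ ≤ (|∇ᵀu|/‖H‖₂)·(√(1 + 2‖H‖₂ξ/|∇ᵀu|²) − 1); consequently the minimal Euclidean norm over the constraint set is at most this quantity. (Upper bound of Lemma 1.) -/

import Mathlib

open scoped RealInnerProductSpace

/-- The spectral norm of a real matrix: the operator norm of the induced linear map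
between Euclidean spaces. For a symmetric PSD matrix this is its largest eigenvalue. -/
noncomputable def matrixSpectralNorm {n : ℕ} (H : Matrix (Fin n) (Fin n) ℝ) : ℝ :=
  ‖LinearMap.toContinuousLinearMap (Matrix.toEuclideanLin H)‖

private lemma key_alg (L a ξ : ℝ) (hL : 0 < L) (ha : 0 < a) (hξ : 0 ≤ ξ) :
    0 ≤ a / L * (Real.sqrt (1 + 2 * L * ξ / a ^ 2) - 1) ∧
    (a / L * (Real.sqrt (1 + 2 * L * ξ / a ^ 2) - 1)) * a +
      L * (a / L * (Real.sqrt (1 + 2 * L * ξ / a ^ 2) - 1)) ^ 2 / 2 = ξ := by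
  have harg : 0 ≤ 1 + 2 * L * ξ / a ^ 2 := by positivity
  have hs2 : Real.sqrt (1 + 2 * L * ξ / a ^ 2) ^ 2 = 1 + 2 * L * ξ / a ^ 2 :=
    Real.sq_sqrt harg
  have hs1 : 1 ≤ Real.sqrt (1 + 2 * L * ξ / a ^ 2) := by
    have h1 : (1:ℝ) ≤ 1 + 2 * L * ξ / a ^ 2 := by
      have : 0 ≤ 2 * L * ξ / a ^ 2 := by positivity
      linarith
    have := Real.sqrt_le_sqrt h1
    simpa using this
  set s := Real.sqrt (1 + 2 * L * ξ / a ^ 2)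
  have ha' : a ≠ 0 := ne_of_gt ha
  have hs2' : s ^ 2 * a ^ 2 = a ^ 2 + 2 * L * ξ := by
    rw [hs2]; field_simp
  constructor
  · apply mul_nonneg (by positivity) (by linarith)
  · have hL' : L ≠ 0 := ne_of_gt hL
    field_simp
    nlinarith [hs2']

/-- Upper bound of Lemma 1: if `u` is a unit eigenvector of the symmetric PSD matrix `H`
associated with its largest eigenvalue `‖H‖₂` and `⟪∇, u⟫ ≠ 0`, then some perturbation `r`
reaching the threshold `ξ` has Euclidean norm at most
`(|∇ᵀu|/‖H‖₂)(√(1 + 2‖H‖₂ξ/|∇ᵀu|²) − 1)`; consequently the minimal norm over the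
constraint set is at most this quantity. -/
theorem stmt1 {n : ℕ} (g : EuclideanSpace ℝ (Fin n)) (H : Matrix (Fin n) (Fin n) ℝ)
    (ξ : ℝ) (hH : H ≠ 0) (hpsd : H.PosSemidef)
    (u : EuclideanSpace ℝ (Fin n)) (hu : ‖u‖ = 1)
    (heig : Matrix.toEuclideanLin H u = matrixSpectralNorm H • u)
    (hgu : ⟪g, u⟫ ≠ 0) (hξ : 0 ≤ ξ) :
    (∃ r : EuclideanSpace ℝ (Fin n),
        ⟪g, r⟫ + (1 / 2) * ⟪r, Matrix.toEuclideanLin H r⟫ ≥ ξ ∧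
        ‖r‖ ≤ |⟪g, u⟫| / matrixSpectralNorm H *
          (Real.sqrt (1 + 2 * matrixSpectralNorm H * ξ / |⟪g, u⟫| ^ 2) - 1)) ∧
    sInf {t : ℝ | ∃ r : EuclideanSpace ℝ (Fin n),
        ⟪g, r⟫ + (1 / 2) * ⟪r, Matrix.toEuclideanLin H r⟫ ≥ ξ ∧ t = ‖r‖} ≤
      |⟪g, u⟫| / matrixSpectralNorm H *
        (Real.sqrt (1 + 2 * matrixSpectralNorm H * ξ / |⟪g, u⟫| ^ 2) - 1) := by
  have hLpos : 0 < matrixSpectralNorm H := by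
    have hne : LinearMap.toContinuousLinearMap (Matrix.toEuclideanLin H) ≠ 0 := by
      intro h0
      apply hH
      have h1 : Matrix.toEuclideanLin H = 0 := by
        have := congrArg ContinuousLinearMap.toLinearMap h0
        simpa using this
      have := congrArg Matrix.toEuclideanLin.symm h1
      simpa using this
    exact norm_pos_iff.mpr hne
  obtain ⟨G, hG⟩ : ∃ G : ℝ, ⟪g, u⟫ = G := ⟨_, rfl⟩
  rw [hG] at hgu ⊢
  have hapos : 0 < |G| := abs_pos.mpr hgu
  obtain ⟨htnn, hkey⟩ := key_alg (matrixSpectralNorm H) |G| ξ hLpos hapos hξ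
  set L := matrixSpectralNorm H
  set t := |G| / L * (Real.sqrt (1 + 2 * L * ξ / |G| ^ 2) - 1) with ht
  clear_value t
  set c := t * (G / |G|) with hc
  have hGG : G * G = |G| * |G| := (abs_mul_abs_self G).symm
  have hG0 : |G| ≠ 0 := ne_of_gt hapos
  have hunit : (G / |G|) * (G / |G|) = 1 := by
    rw [div_mul_div_comm, hGG]
    exact div_self (mul_ne_zero hG0 hG0)
  have hcgu : c * G = t * |G| := by
    calc c * G = t * (G * G / |G|) := by rw [hc]; ring
    _ = t * (|G| * |G| / |G|) := by rw [hGG]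
    _ = t * |G| := by rw [mul_div_cancel_right₀ _ hG0]
  have hc2 : c * c = t * t := by
    calc c * c = t * t * ((G / |G|) * (G / |G|)) := by rw [hc]; ring
    _ = t * t := by rw [hunit, mul_one]
  have hcons : ⟪g, c • u⟫ + (1 / 2) * ⟪c • u, Matrix.toEuclideanLin H (c • u)⟫ ≥ ξ := by
    have h1 : ⟪g, c • u⟫ = c * G := by rw [real_inner_smul_right, hG]
    have h2 : Matrix.toEuclideanLin H (c • u) = c • (L • u) := by rw [map_smul, heig]
    have huu : ⟪u, u⟫ = 1 := by rw [real_inner_self_eq_norm_sq, hu]; norm_num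
    have h3 : ⟪c • u, Matrix.toEuclideanLin H (c • u)⟫ = c * c * L := by
      rw [h2, real_inner_smul_left, real_inner_smul_right, real_inner_smul_right, huu]
      ring
    rw [ge_iff_le, h1, h3, hcgu, hc2]
    have : t * |G| + 1 / 2 * (t * t * L) = t * |G| + L * t ^ 2 / 2 := by ring
    rw [this, hkey]
  have hnorm : ‖c • u‖ = t := by
    rw [norm_smul, Real.norm_eq_abs, hu, mul_one, hc, abs_mul, abs_of_nonneg htnn,
      abs_div, abs_abs, div_self hG0, mul_one]
  refine ⟨⟨c • u, hcons, by rw [hnorm]⟩, ?_⟩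
  apply csInf_le
  · refine ⟨0, ?_⟩
    rintro x ⟨r, -, rfl⟩
    exact norm_nonneg r
  · exact ⟨c • u, hcons, hnorm.symm⟩
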